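/- Let μ be a probability distribution supported on the union of C pairwise disjoint classes X^(1),…,X^(C) that are r-separated (dist(X^(i),X^(j)) ≥ 2r for i≠j). Then the classifier g(x) = argmin_i dist(x, X^(i)) has astuteness 1 at radius r under μ: μ-almost every labeled example (x,y) with x ∈ X^(y) satisfies g(x') = y for all x' ∈ B(x,r). -/
import Mathlib

open MeasureTheory

/-- a probability distribution `μ` on labeled examples supported on
`r`-separated disjoint classes gives astuteness `1` at radius `r` to the
nearest-class classifier: the event that `x ∈ X⁽ʸ⁾` and every `x'` in the closed
`r`-ball of `x` is classified as `y` has probability `1`. -/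
theorem astuteness_one {X : Type*} [MetricSpace X] [MeasurableSpace X] {C : ℕ}
    (hC : 2 ≤ C) (Xc : Fin C → Set X) (hne : ∀ i, (Xc i).Nonempty)
    (hdisj : ∀ i j, i ≠ j → Disjoint (Xc i) (Xc j))
    (r : ℝ) (hr : 0 < r)
    (hsep : ∀ i j, i ≠ j → ∀ a ∈ Xc i, ∀ b ∈ Xc j, 2 * r ≤ dist a b)
    (μ : Measure (X × Fin C)) [IsProbabilityMeasure μ]
    (hsupp : μ {p : X × Fin C | p.1 ∈ Xc p.2} = 1) :
    μ {p : X × Fin C | p.1 ∈ Xc p.2 ∧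
        ∀ x' ∈ Metric.closedBall p.1 r, ∀ j : Fin C,
          Metric.infDist x' (Xc p.2) ≤ Metric.infDist x' (Xc j)} = 1 := by
  have hsub : {p : X × Fin C | p.1 ∈ Xc p.2} ⊆
      {p : X × Fin C | p.1 ∈ Xc p.2 ∧
        ∀ x' ∈ Metric.closedBall p.1 r, ∀ j : Fin C,
          Metric.infDist x' (Xc p.2) ≤ Metric.infDist x' (Xc j)} := by
    rintro ⟨x, y⟩ hx
    refine ⟨hx, fun x' hx' j => ?_⟩
    rcases eq_or_ne j y with rfl | hj
    · exact le_refl _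
    have h1 : Metric.infDist x' (Xc y) ≤ r := by
      calc Metric.infDist x' (Xc y) ≤ dist x' x := Metric.infDist_le_dist_of_mem hx
        _ ≤ r := by simpa [dist_comm] using Metric.mem_closedBall.mp hx'
    have h2 : r ≤ Metric.infDist x' (Xc j) := by
      by_contra h
      push_neg at h
      obtain ⟨b, hb, hbd⟩ := (Metric.infDist_lt_iff (hne j)).mp h
      have hsep' := hsep y j (Ne.symm hj) x hx b hb
      have := dist_triangle x x' b
      have hxx' : dist x x' ≤ r := by simpa [dist_comm] using Metric.mem_closedBall.mp hx'
      linarith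
    linarith
  refine le_antisymm (prob_le_one) ?_
  calc (1 : ENNReal) = μ {p : X × Fin C | p.1 ∈ Xc p.2} := hsupp.symm
    _ ≤ _ := measure_mono hsub
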